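/- arXiv:1912.00319 — 2 statements merged into one kernel-verified Lean document; each statement's English description precedes it below -/
import Mathlib

section
/- If |v_i| = |v_m| = 1 for all buses and θ satisfies the DC power flow equations ∑_m B_{im}(θ_i − θ_m) = p_l i − pg i at every bus i, and additionally the AC active power equations hold at every bus with the same p values, then ∑_i ∑_m G_{im} cos(θ_i − θ_m) = 0. -/
/-!
Summed over all buses, each term `B i m * f (θ i - θ m)` with `f` odd cancels against its mirror
`B m i * f (θ m - θ i)`. The DC equations therefore force the total net injection to vanish, and in
the summed AC equations only the conductance–cosine part survives.
-/

open Finset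

theorem sum_sum_mul_odd_sub_eq_zero {ι α R : Type*} [Fintype ι] [AddGroup α] [Ring R]
    [IsAddTorsionFree R] (w : ι → ι → R) (hw : ∀ i j, w i j = w j i) {f : α → R}
    (hf : f.Odd) (θ : ι → α) :
    ∑ i, ∑ j, w i j * f (θ i - θ j) = 0 := by
  have hswap (i j : ι) : w i j * f (θ i - θ j) = -(w j i * f (θ j - θ i)) := by
    rw [hw, ← neg_sub, hf, mul_neg]
  refine self_eq_neg.mp ?_
  calc ∑ i, ∑ j, w i j * f (θ i - θ j)
      = -∑ i, ∑ j, w j i * f (θ j - θ i) := by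
        simp only [← sum_neg_distrib]
        exact Fintype.sum_congr _ _ fun i => Fintype.sum_congr _ _ (hswap i)
    _ = -∑ i, ∑ j, w i j * f (θ i - θ j) := by rw [sum_comm]

theorem ac_dc_both_hold_losses_zero_general (n : ℕ) (G B : Fin n → Fin n → ℝ) (θ : Fin n → ℝ)
    (p_l p_g : Fin n → ℝ)
    (hB : ∀ i m, B i m = B m i)
    (hDC : ∀ i, ∑ m, B i m * (θ i - θ m) = p_l i - p_g i)
    (hAC : ∀ i, ∑ m, (G i m * Real.cos (θ i - θ m) + B i m * Real.sin (θ i - θ m))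
      = p_l i - p_g i) :
    ∑ i, ∑ m, G i m * Real.cos (θ i - θ m) = 0 := by
  have hnet : ∑ i, (p_l i - p_g i) = 0 := by
    simpa only [← hDC, id_eq] using sum_sum_mul_odd_sub_eq_zero B hB (f := id) (fun _ => rfl) θ
  have hsin : ∑ i, ∑ m, B i m * Real.sin (θ i - θ m) = 0 :=
    sum_sum_mul_odd_sub_eq_zero B hB Real.sin_neg θ
  simpa only [← hAC, sum_add_distrib, hsin, add_zero] using hnet

theorem ac_dc_both_hold_losses_zero (n : ℕ) (G B : Fin n → Fin n → ℝ) (θ : Fin n → ℝ)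
    (p_l p_g : Fin n → ℝ)
    (hG : ∀ i m, G i m = G m i) (hB : ∀ i m, B i m = B m i)
    (hDC : ∀ i, ∑ m, B i m * (θ i - θ m) = p_l i - p_g i)
    (hAC : ∀ i, ∑ m, (G i m * Real.cos (θ i - θ m) + B i m * Real.sin (θ i - θ m))
      = p_l i - p_g i) :
    ∑ i, ∑ m, G i m * Real.cos (θ i - θ m) = 0 :=
  ac_dc_both_hold_losses_zero_general n G B θ p_l p_g hB hDC hAC
end

section
/- Let G, B : Fin n → Fin n → ℝ be symmetric, with G i m ≥ 0 for all i ≠ m, G i₀ m₀ > 0 for some i₀ ≠ m₀, and |θ i − θ m| < π/2 for all i, m. If both the AC (unit-voltage) and DC power balance equations hold at every bus for the same injections, then False. -/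
/-!
Subtracting the DC balance from the AC balance and summing over all buses, the susceptance
terms `B i m (sin (θ i - θ m) - (θ i - θ m))` cancel in pairs, being antisymmetric in `(i, m)`,
and so do the injections. What remains is `∑ i, ∑ m, G i m * cos (θ i - θ m) = 0`, which is
impossible since every term is nonnegative (angle differences below `π / 2` have positive
cosine) and the term at `(i₀, m₀)` is positive.
-/

open Finset Real

theorem Finset.sum_sum_eq_zero_of_antisymm {ι M : Type*} [Fintype ι] [AddCommGroup M]
    [IsAddTorsionFree M] (f : ι → ι → M) (hf : ∀ i m, f i m = -f m i) :
    ∑ i, ∑ m, f i m = 0 :=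
  self_eq_neg.mp <| calc
    ∑ i, ∑ m, f i m = ∑ m, ∑ i, f i m := sum_comm
    _ = ∑ m, ∑ i, -f m i := sum_congr rfl fun m _ => sum_congr rfl fun i _ => hf i m
    _ = -∑ i, ∑ m, f i m := by simp only [sum_neg_distrib]

section PowerFlow

variable {ι : Type*} [Fintype ι] (G B : ι → ι → ℝ) (θ c : ι → ℝ)

theorem sum_sum_conductance_cos_eq_zero (hB : ∀ i m, B i m = B m i)
    (hAC : ∀ i, ∑ m, (G i m * cos (θ i - θ m) + B i m * sin (θ i - θ m)) = c i)
    (hDC : ∀ i, ∑ m, B i m * (θ i - θ m) = c i) :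
    ∑ i, ∑ m, G i m * cos (θ i - θ m) = 0 := by
  have hodd : ∑ i, ∑ m, B i m * (sin (θ i - θ m) - (θ i - θ m)) = 0 := by
    refine sum_sum_eq_zero_of_antisymm _ fun i m => ?_
    rw [hB i m, ← neg_sub (θ m), sin_neg]
    ring
  have hrow : ∀ i, ∑ m, G i m * cos (θ i - θ m) =
      (∑ m, (G i m * cos (θ i - θ m) + B i m * sin (θ i - θ m)) - ∑ m, B i m * (θ i - θ m))
        - ∑ m, B i m * (sin (θ i - θ m) - (θ i - θ m)) := fun i => by
    simp only [← sum_sub_distrib]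
    exact sum_congr rfl fun m _ => by ring
  simp only [hrow, hAC, hDC, sub_self, zero_sub, sum_neg_distrib, hodd, neg_zero]

theorem sum_sum_conductance_cos_pos (hG : ∀ i m, 0 ≤ G i m) {i₀ m₀ : ι} (hGpos : 0 < G i₀ m₀)
    (hθ : ∀ i m, |θ i - θ m| < π / 2) :
    0 < ∑ i, ∑ m, G i m * cos (θ i - θ m) := by
  have hcos : ∀ i m, 0 < cos (θ i - θ m) := fun i m =>
    cos_pos_of_mem_Ioo (abs_lt.mp (hθ i m))
  have hterm : ∀ i m, 0 ≤ G i m * cos (θ i - θ m) := fun i m =>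
    mul_nonneg (hG i m) (hcos i m).le
  exact sum_pos' (fun i _ => sum_nonneg fun m _ => hterm i m)
    ⟨i₀, mem_univ _, sum_pos' (fun m _ => hterm i₀ m)
      ⟨m₀, mem_univ _, mul_pos hGpos (hcos i₀ m₀)⟩⟩

end PowerFlow

theorem network_infeasible_general (n : ℕ) (G B : Fin n → Fin n → ℝ) (θ : Fin n → ℝ)
    (c : Fin n → ℝ)
    (hB : ∀ i m, B i m = B m i)
    (hGoff : ∀ i m, i ≠ m → G i m ≥ 0) (hGdiag : ∀ i, G i i ≥ 0)
    (i₀ m₀ : Fin n) (hGpos : G i₀ m₀ > 0)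
    (hθ : ∀ i m, |θ i - θ m| < Real.pi / 2)
    (hAC : ∀ i, ∑ m, (G i m * Real.cos (θ i - θ m) + B i m * Real.sin (θ i - θ m)) = c i)
    (hDC : ∀ i, ∑ m, B i m * (θ i - θ m) = c i) : False := by
  have hG : ∀ i m, 0 ≤ G i m := fun i m => by
    obtain rfl | hne := eq_or_ne i m
    exacts [hGdiag i, hGoff i m hne]
  have hpos := sum_sum_conductance_cos_pos G θ hG hGpos hθ
  rw [sum_sum_conductance_cos_eq_zero G B θ c hB hAC hDC] at hpos
  exact lt_irrefl 0 hpos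

theorem network_infeasible (n : ℕ) (G B : Fin n → Fin n → ℝ) (θ : Fin n → ℝ)
    (c : Fin n → ℝ)
    (hG : ∀ i m, G i m = G m i) (hB : ∀ i m, B i m = B m i)
    (hGoff : ∀ i m, i ≠ m → G i m ≥ 0) (hGdiag : ∀ i, G i i ≥ 0)
    (i₀ m₀ : Fin n) (hne : i₀ ≠ m₀) (hGpos : G i₀ m₀ > 0)
    (hθ : ∀ i m, |θ i - θ m| < Real.pi / 2)
    (hAC : ∀ i, ∑ m, (G i m * Real.cos (θ i - θ m) + B i m * Real.sin (θ i - θ m)) = c i)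
    (hDC : ∀ i, ∑ m, B i m * (θ i - θ m) = c i) : False :=
  network_infeasible_general n G B θ c hB hGoff hGdiag i₀ m₀ hGpos hθ hAC hDC
end
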